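/- Let λ > 0, c > 0, t > 0, let m ≥ 1 be an integer, and define p(u,t) = (e^{−λt}/c) [ −λ F(u,t) + (∂F/∂t)(u,t) + (2/λ)(∂²F/∂t²)(u,t) ], where F(u,t) = ∑_{k=0}^∞ (λ/(2c))^{2k} (c²t² − u²)^k / (k!)². Then the m-th moment of 𝒰(t), namely ∫₀^{ct} u^m p(u,t) du + (ct)^m e^{−λt}(1 + λt), equals (e^{−λt}/c) [ (λ/2) Γ((m+1)/2) (2c²t/λ)^{(m+1)/2} I_{(m+1)/2}(λt) − (2/λ) m c² (ct)^{m−1} + Γ((m+1)/2) I_{(m−1)/2}(λt) ( (λ/2)(2c²t/λ)^{(m+1)/2} + (2mc²/λ)(2c²t/λ)^{(m−1)/2} ) ]. -/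

import Mathlib

/-- `F(u,t) = ∑_{k=0}^∞ (λ/(2c))^{2k} (c²t² − u²)^k / (k!)²`,
which equals `I₀((λ/c)√(c²t² − u²))` for `|u| ≤ ct`. -/
noncomputable def F (lam c u t : ℝ) : ℝ :=
  ∑' k : ℕ, (lam / (2 * c)) ^ (2 * k) * (c ^ 2 * t ^ 2 - u ^ 2) ^ k /
    ((Nat.factorial k : ℝ)) ^ 2

/-- The density of the absolutely continuous component of the planar cyclic motion:
`p(u,t) = (e^{−λt}/c)[−λF + ∂F/∂t + (2/λ)∂²F/∂t²]`. -/
noncomputable def planarDensity (lam c u t : ℝ) : ℝ :=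
  Real.exp (-(lam * t)) / c *
    (-(lam * F lam c u t) + deriv (fun s => F lam c u s) t +
      2 / lam * iteratedDeriv 2 (fun s => F lam c u s) t)

/-- The modified Bessel function of the first kind of order `ν`:
`I_ν(x) = ∑_{k=0}^∞ (x/2)^{2k+ν} / (k! Γ(k+ν+1))`. -/
noncomputable def besselI (ν x : ℝ) : ℝ :=
  ∑' k : ℕ, (x / 2) ^ (2 * (k : ℝ) + ν) /
    ((Nat.factorial k : ℝ) * Real.Gamma ((k : ℝ) + ν + 1))

/-!
With `r = (λ/(2c))²`, `F(u,t) = G(c²t² - u²)` for the entire series `G(y) = ∑ rᵏ yᵏ/(k!)²`, so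
`∂ₜF` and `∂ₜ²F` are combinations of `G'` and `G''` at `c²t² - u²`, again power series in
`c²t² - u²`. Integrating against `uᵐ` termwise produces the Beta integrals
`∫₀^{ct} uᵐ (c²t² - u²)ᵏ du = (ct)^{m+1+2k} k! Γ(ν) / (2 Γ(k+ν+1))`, `ν = (m+1)/2`, which turn
the three pieces into the series `Sⱼ(ν) = ∑ qᵏ / ((k+j)! Γ(k+ν+1))`, `q = (λt/2)²`, where
`S₀(ν) = (λt/2)^{-ν} I_ν(λt)`. The index shifts `Sⱼ(ν-1) = 1/(j! Γ(ν)) + q Sⱼ₊₁(ν)` and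
`S₁(ν-1) = (ν-1) S₁(ν) + S₀(ν)` reduce everything to `I_ν(λt)` and `I_{ν-1}(λt)`; the elementary
terms left over by the constants `1/(j! Γ(ν))`, together with the singular mass, match those of the
right-hand side.
-/
open scoped Nat
open MeasureTheory Set
open scoped Interval

def derivCoeff (b : ℕ → ℝ) (k : ℕ) : ℝ := (k + 1) * b (k + 1)

section FactorialDecay

variable {b : ℕ → ℝ} {C ρ : ℝ}

theorem summable_norm_mul_pow_of_abs_le (hb : ∀ k, |b k| ≤ C * ρ ^ k / k !) (y : ℝ) :
    Summable fun k => ‖b k * y ^ k‖ := by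
  refine Summable.of_nonneg_of_le (fun k => norm_nonneg _) (fun k => ?_)
    ((Real.summable_pow_div_factorial (ρ * |y|)).mul_left C)
  calc ‖b k * y ^ k‖ = |b k| * |y| ^ k := by
        rw [norm_mul, norm_pow, Real.norm_eq_abs, Real.norm_eq_abs]
    _ ≤ C * ρ ^ k / k ! * |y| ^ k := by gcongr; exact hb k
    _ = C * ((ρ * |y|) ^ k / k !) := by ring

theorem abs_derivCoeff_le (hb : ∀ k, |b k| ≤ C * ρ ^ k / k !) (k : ℕ) :
    |derivCoeff b k| ≤ C * ρ * ρ ^ k / k ! := by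
  calc |derivCoeff b k| = (k + 1) * |b (k + 1)| := by
        rw [derivCoeff, abs_mul, abs_of_nonneg (by positivity)]
    _ ≤ (k + 1) * (C * ρ ^ (k + 1) / (k + 1)!) := by gcongr; exact hb _
    _ = C * ρ * ρ ^ k / k ! := by
        rw [Nat.factorial_succ]; push_cast; field_simp; ring

theorem hasDerivAt_tsum_mul_pow (hb : ∀ k, |b k| ≤ C * ρ ^ k / k !) (y : ℝ) :
    HasDerivAt (fun z => ∑' k, b k * z ^ k) (∑' k, derivCoeff b k * y ^ k) y := by
  set R := |y| + 1
  have hy : y ∈ Metric.ball (0 : ℝ) R := by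
    rw [mem_ball_zero_iff, Real.norm_eq_abs]; exact lt_add_one _
  have hbound : ∀ n, ∀ z ∈ Metric.ball (0 : ℝ) R,
      ‖b n * (n * z ^ (n - 1))‖ ≤ ‖b n * (n * R ^ (n - 1))‖ := by
    intro n z hz
    rw [mem_ball_zero_iff, Real.norm_eq_abs] at hz
    simp only [norm_mul, norm_pow, Real.norm_eq_abs, Nat.abs_cast]
    have hzR : |z| ≤ |R| := hz.le.trans (le_abs_self R)
    gcongr
  have hsum : Summable fun n => ‖b n * (n * R ^ (n - 1))‖ := by
    rw [← summable_nat_add_iff 1]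
    refine (summable_norm_mul_pow_of_abs_le (abs_derivCoeff_le hb) R).congr fun k => ?_
    simp only [derivCoeff, Nat.add_sub_cancel, Nat.cast_add, Nat.cast_one]
    ring_nf
  have hderiv := hasDerivAt_tsum_of_isPreconnected hsum Metric.isOpen_ball
    (convex_ball 0 R).isPreconnected (fun n z _ => (hasDerivAt_pow n z).const_mul (b n)) hbound
    (Metric.mem_ball_self (by positivity)) (summable_norm_mul_pow_of_abs_le hb 0).of_norm hy
  refine hderiv.congr_deriv ?_
  rw [Summable.tsum_eq_zero_add (Summable.of_norm_bounded hsum fun n => hbound n y hy)]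
  simp only [derivCoeff, CharP.cast_eq_zero, zero_mul, mul_zero, zero_add, Nat.add_sub_cancel,
    Nat.cast_add, Nat.cast_one]
  exact tsum_congr fun k => by ring

theorem integral_pow_mul_tsum_mul_pow (hb : ∀ k, |b k| ≤ C * ρ ^ k / k !) (m : ℕ) (a : ℝ) :
    ∫ u in (0 : ℝ)..a, u ^ m * ∑' k, b k * (a ^ 2 - u ^ 2) ^ k =
      ∑' k, b k * ∫ u in (0 : ℝ)..a, u ^ m * (a ^ 2 - u ^ 2) ^ k := by
  have hbound : ∀ k, ∀ u ∈ Ι (0 : ℝ) a,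
      ‖u ^ m * (b k * (a ^ 2 - u ^ 2) ^ k)‖ ≤ |a| ^ m * ‖b k * (a ^ 2) ^ k‖ := by
    intro k u hu
    have hua : |u| ≤ |a| := by simpa using abs_sub_left_of_mem_uIcc (uIoc_subset_uIcc hu)
    have hX : |a ^ 2 - u ^ 2| ≤ |a| ^ 2 := by
      rw [sq_abs, abs_le]; constructor <;> nlinarith [sq_le_sq.mpr hua, sq_nonneg u]
    simp only [norm_mul, norm_pow, Real.norm_eq_abs]
    gcongr
  have hsum := intervalIntegral.hasSum_integral_of_dominated_convergence
    (fun k _ => |a| ^ m * ‖b k * (a ^ 2) ^ k‖)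
    (fun k => (by fun_prop : Continuous _).aestronglyMeasurable)
    (fun k => ae_of_all _ (hbound k))
    (ae_of_all _ fun _ _ => (summable_norm_mul_pow_of_abs_le hb _).mul_left _)
    (intervalIntegrable_const (μ := volume))
    (ae_of_all _ fun u _ => (summable_norm_mul_pow_of_abs_le hb _).of_norm.hasSum.mul_left (u ^ m))
  rw [← hsum.tsum_eq]
  refine tsum_congr fun k => ?_
  rw [← intervalIntegral.integral_const_mul]
  exact intervalIntegral.integral_congr fun u _ => by ring

end FactorialDecay

noncomputable def besselCoeff (r : ℝ) (j k : ℕ) : ℝ := r ^ (k + j) / ((k + j)! * k !)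

/-- `besselSeries r j` is the `j`-th derivative of `y ↦ ∑ₖ rᵏ yᵏ / (k!)²`. -/
noncomputable def besselSeries (r : ℝ) (j : ℕ) (y : ℝ) : ℝ := ∑' k, besselCoeff r j k * y ^ k

theorem derivCoeff_besselCoeff (r : ℝ) (j : ℕ) :
    derivCoeff (besselCoeff r j) = besselCoeff r (j + 1) := by
  funext k
  rw [derivCoeff, besselCoeff, besselCoeff, show k + 1 + j = k + (j + 1) by ring,
    Nat.factorial_succ k]
  push_cast
  field_simp

theorem abs_besselCoeff_le (r : ℝ) (j k : ℕ) : |besselCoeff r j k| ≤ |r| ^ j * |r| ^ k / k ! := by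
  have hfac : (1 : ℝ) ≤ (k + j)! := by exact_mod_cast (k + j).factorial_pos
  rw [besselCoeff, abs_div, abs_pow, abs_of_pos (by positivity : (0 : ℝ) < (k + j)! * k !),
    pow_add, mul_comm (|r| ^ k)]
  exact div_le_div_of_nonneg_left (by positivity) (by positivity)
    (le_mul_of_one_le_left (by positivity) hfac)

theorem hasDerivAt_besselSeries (r : ℝ) (j : ℕ) (y : ℝ) :
    HasDerivAt (besselSeries r j) (besselSeries r (j + 1) y) y := by
  have h := hasDerivAt_tsum_mul_pow (abs_besselCoeff_le r j) y
  rwa [derivCoeff_besselCoeff] at h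

theorem continuous_besselSeries (r : ℝ) (j : ℕ) : Continuous (besselSeries r j) :=
  continuous_iff_continuousAt.2 fun y => (hasDerivAt_besselSeries r j y).continuousAt

theorem hasDerivAt_besselSeries_comp (r : ℝ) (j : ℕ) (a b s : ℝ) :
    HasDerivAt (fun s => besselSeries r j (a * s ^ 2 - b))
      (2 * a * s * besselSeries r (j + 1) (a * s ^ 2 - b)) s := by
  have h := (hasDerivAt_besselSeries r j _).comp s (((hasDerivAt_pow 2 s).const_mul a).sub_const b)
  refine h.congr_deriv ?_
  push_cast
  ring

theorem F_eq_besselSeries (lam c u s : ℝ) :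
    F lam c u s = besselSeries ((lam / (2 * c)) ^ 2) 0 (c ^ 2 * s ^ 2 - u ^ 2) := by
  refine tsum_congr fun k => ?_
  rw [besselCoeff, add_zero, ← pow_mul, sq ((k ! : ℝ))]
  ring

theorem planarDensity_eq (lam c u t : ℝ) :
    planarDensity lam c u t = Real.exp (-(lam * t)) / c *
      (-(lam * besselSeries ((lam / (2 * c)) ^ 2) 0 (c ^ 2 * t ^ 2 - u ^ 2)) +
        2 * c ^ 2 * t * besselSeries ((lam / (2 * c)) ^ 2) 1 (c ^ 2 * t ^ 2 - u ^ 2) +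
        2 / lam * (2 * c ^ 2 * besselSeries ((lam / (2 * c)) ^ 2) 1 (c ^ 2 * t ^ 2 - u ^ 2) +
          2 * c ^ 2 * t * (2 * c ^ 2 * t *
            besselSeries ((lam / (2 * c)) ^ 2) 2 (c ^ 2 * t ^ 2 - u ^ 2)))) := by
  set r := (lam / (2 * c)) ^ 2
  have hF : (fun s => F lam c u s) = fun s => besselSeries r 0 (c ^ 2 * s ^ 2 - u ^ 2) :=
    funext (F_eq_besselSeries lam c u)
  have hdF : deriv (fun s => F lam c u s) =
      fun s => 2 * c ^ 2 * s * besselSeries r 1 (c ^ 2 * s ^ 2 - u ^ 2) :=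
    funext fun s => hF ▸ (hasDerivAt_besselSeries_comp r 0 _ _ s).deriv
  have hd2F : HasDerivAt (fun s => 2 * c ^ 2 * s * besselSeries r 1 (c ^ 2 * s ^ 2 - u ^ 2))
      (2 * c ^ 2 * besselSeries r 1 (c ^ 2 * t ^ 2 - u ^ 2) +
        2 * c ^ 2 * t * (2 * c ^ 2 * t * besselSeries r 2 (c ^ 2 * t ^ 2 - u ^ 2))) t := by
    have h := ((hasDerivAt_id t).const_mul (2 * c ^ 2)).mul
      (hasDerivAt_besselSeries_comp r 1 (c ^ 2) (u ^ 2) t)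
    simp only [id, mul_one] at h
    exact h
  rw [planarDensity, iteratedDeriv_succ, iteratedDeriv_one, hdF, hd2F.deriv, F_eq_besselSeries]

theorem integral_pow_mul_sq_sub_sq_pow_succ (m k : ℕ) (a : ℝ) :
    (m + 2 * k + 3) * ∫ u in (0 : ℝ)..a, u ^ m * (a ^ 2 - u ^ 2) ^ (k + 1) =
      2 * (k + 1) * a ^ 2 * ∫ u in (0 : ℝ)..a, u ^ m * (a ^ 2 - u ^ 2) ^ k := by
  have hderiv : ∀ u ∈ uIcc 0 a, HasDerivAt (fun u => u ^ (m + 1) * (a ^ 2 - u ^ 2) ^ (k + 1))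
      ((m + 2 * k + 3) * (u ^ m * (a ^ 2 - u ^ 2) ^ (k + 1)) -
        2 * (k + 1) * a ^ 2 * (u ^ m * (a ^ 2 - u ^ 2) ^ k)) u := by
    intro u _
    refine ((hasDerivAt_pow (m + 1) u).mul
      (((hasDerivAt_pow 2 u).const_sub (a ^ 2)).pow (k + 1))).congr_deriv ?_
    simp only [Pi.pow_apply, Nat.add_sub_cancel, Nat.cast_add, Nat.cast_one, Nat.cast_ofNat]
    ring
  have hint : ∀ j : ℕ, IntervalIntegrable (fun u => u ^ m * (a ^ 2 - u ^ 2) ^ j) volume 0 a :=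
    fun j => (by fun_prop : Continuous _).intervalIntegrable 0 a
  have hFTC := intervalIntegral.integral_eq_sub_of_hasDerivAt hderiv
    (((hint _).const_mul _).sub ((hint _).const_mul _))
  rw [intervalIntegral.integral_sub ((hint _).const_mul _) ((hint _).const_mul _),
    intervalIntegral.integral_const_mul, intervalIntegral.integral_const_mul] at hFTC
  simp only [sub_self, ne_eq, add_eq_zero, one_ne_zero, and_false, not_false_eq_true, zero_pow,
    mul_zero] at hFTC
  linarith

/-- A Beta integral: `∫₀ᵃ uᵐ (a² - u²)ᵏ du = a^(m+1+2k) B((m+1)/2, k+1) / 2`. -/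
theorem integral_pow_mul_sq_sub_sq_pow (m k : ℕ) (a : ℝ) :
    ∫ u in (0 : ℝ)..a, u ^ m * (a ^ 2 - u ^ 2) ^ k =
      a ^ (m + 1 + 2 * k) * (k ! * Real.Gamma ((m + 1) / 2) /
        (2 * Real.Gamma (k + (m + 1) / 2 + 1))) := by
  set ν : ℝ := (m + 1) / 2
  have hν : 0 < ν := by positivity
  induction k with
  | zero =>
    simp only [pow_zero, mul_one, Nat.factorial_zero, Nat.cast_one, CharP.cast_eq_zero, zero_add,
      mul_zero, add_zero]
    rw [Real.Gamma_add_one hν.ne', integral_pow]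
    have := Real.Gamma_pos_of_pos hν
    field_simp
    ring
  | succ k ih =>
    have hrec := integral_pow_mul_sq_sub_sq_pow_succ m k a
    have hΓ : Real.Gamma ((k + 1 : ℕ) + ν + 1) = (k + ν + 1) * Real.Gamma (k + ν + 1) := by
      rw [← Real.Gamma_add_one (by positivity)]; push_cast; ring_nf
    have hcoef : (m : ℝ) + 2 * k + 3 = 2 * (k + ν + 1) := by simp only [ν]; ring
    rw [ih, hcoef] at hrec
    rw [hΓ, Nat.factorial_succ]
    have := Real.Gamma_pos_of_pos (show 0 < (k : ℝ) + ν + 1 by positivity)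
    field_simp at hrec ⊢
    rw [show m + 1 + 2 * (k + 1) = (m + 1 + 2 * k) + 2 by ring, pow_add]
    push_cast
    linear_combination hrec

noncomputable def besselSum (j : ℕ) (ν q : ℝ) : ℝ :=
  ∑' k : ℕ, q ^ k / ((k + j)! * Real.Gamma (k + ν + 1))

theorem integral_pow_mul_besselSeries (r : ℝ) (j m : ℕ) (a : ℝ) :
    ∫ u in (0 : ℝ)..a, u ^ m * besselSeries r j (a ^ 2 - u ^ 2) =
      r ^ j * a ^ (m + 1) * Real.Gamma ((m + 1) / 2) / 2 *
        besselSum j ((m + 1) / 2) (r * a ^ 2) := by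
  simp only [besselSeries]
  rw [integral_pow_mul_tsum_mul_pow (abs_besselCoeff_le r j), besselSum, ← tsum_mul_left]
  refine tsum_congr fun k => ?_
  rw [integral_pow_mul_sq_sub_sq_pow, besselCoeff]
  have := Real.Gamma_pos_of_pos (show 0 < (k : ℝ) + (m + 1) / 2 + 1 by positivity)
  field_simp
  ring

theorem factorial_mul_Gamma_le_Gamma {ν : ℝ} (hν : 0 ≤ ν) (k : ℕ) :
    k ! * Real.Gamma (ν + 1) ≤ Real.Gamma (k + ν + 1) := by
  induction k with
  | zero => simp
  | succ k ih =>
    have hk : (0 : ℝ) ≤ k := k.cast_nonneg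
    rw [Nat.factorial_succ, show ((k + 1 : ℕ) : ℝ) + ν + 1 = (k + ν + 1) + 1 by push_cast; ring,
      Real.Gamma_add_one (s := k + ν + 1) (by linarith)]
    push_cast
    rw [mul_assoc]
    have := Real.Gamma_pos_of_pos (show 0 < (k : ℝ) + ν + 1 by linarith)
    gcongr
    linarith

theorem summable_besselSum (j : ℕ) {ν : ℝ} (hν : 0 ≤ ν) (q : ℝ) :
    Summable fun k : ℕ => q ^ k / ((k + j)! * Real.Gamma (k + ν + 1)) := by
  have hΓ := Real.Gamma_pos_of_pos (show 0 < ν + 1 by linarith)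
  refine Summable.of_norm_bounded ((Real.summable_pow_div_factorial |q|).div_const
    (Real.Gamma (ν + 1))) fun k => ?_
  have hfac : (1 : ℝ) ≤ (k + j)! := by exact_mod_cast (k + j).factorial_pos
  rw [norm_div, norm_pow, Real.norm_eq_abs, div_div,
    Real.norm_of_nonneg (by positivity : (0 : ℝ) ≤ (k + j)! * Real.Gamma (k + ν + 1))]
  refine div_le_div_of_nonneg_left (by positivity) (by positivity) ?_
  calc (k ! : ℝ) * Real.Gamma (ν + 1) ≤ Real.Gamma (k + ν + 1) :=
        factorial_mul_Gamma_le_Gamma hν k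
    _ ≤ (k + j)! * Real.Gamma (k + ν + 1) :=
        le_mul_of_one_le_left (Real.Gamma_pos_of_pos (by linarith [k.cast_nonneg (α := ℝ)])).le
          hfac

theorem besselSum_sub_one (j : ℕ) {ν : ℝ} (hν : 1 ≤ ν) (q : ℝ) :
    besselSum j (ν - 1) q = 1 / (j ! * Real.Gamma ν) + q * besselSum (j + 1) ν q := by
  rw [besselSum, (summable_besselSum j (by linarith) q).tsum_eq_zero_add, besselSum,
    ← tsum_mul_left]
  congr 1
  · simp
  · refine tsum_congr fun k => ?_
    rw [show k + 1 + j = k + (j + 1) by ring]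
    push_cast
    ring_nf

theorem besselSum_one_sub_one {ν : ℝ} (hν : 0 < ν) (q : ℝ) :
    besselSum 1 (ν - 1) q = (ν - 1) * besselSum 1 ν q + besselSum 0 ν q := by
  rw [besselSum, besselSum, besselSum, ← tsum_mul_left,
    ← (summable_besselSum 1 hν.le q).mul_left _ |>.tsum_add (summable_besselSum 0 hν.le q)]
  refine tsum_congr fun k => ?_
  have hΓ : Real.Gamma (k + ν + 1) = (k + ν) * Real.Gamma (k + ν) :=
    Real.Gamma_add_one (by positivity)
  have := Real.Gamma_pos_of_pos (show 0 < (k : ℝ) + ν by positivity)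
  rw [show (k : ℝ) + (ν - 1) + 1 = k + ν by ring, hΓ, Nat.factorial_succ]
  push_cast [add_zero]
  field_simp
  ring

theorem besselSum_two {ν : ℝ} (hν : 1 ≤ ν) (q : ℝ) :
    q * besselSum 2 ν q = (ν - 1) * besselSum 1 ν q + besselSum 0 ν q - 1 / Real.Gamma ν := by
  have h := besselSum_sub_one 1 hν q
  rw [Nat.factorial_one, Nat.cast_one, one_mul, besselSum_one_sub_one (by linarith)] at h
  linarith

theorem besselI_eq_rpow_mul_besselSum (ν : ℝ) {x : ℝ} (hx : 0 < x) :
    besselI ν x = (x / 2) ^ ν * besselSum 0 ν ((x / 2) ^ 2) := by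
  rw [besselI, besselSum, ← tsum_mul_left]
  refine tsum_congr fun k => ?_
  rw [Real.rpow_add (by positivity), Real.rpow_mul (by positivity), Real.rpow_two,
    Real.rpow_natCast, add_zero]
  ring

theorem integral_pow_mul_planarDensity {lam c : ℝ} (hlam : lam ≠ 0) (hc : c ≠ 0) (t : ℝ) (m : ℕ) :
    ∫ u in (0 : ℝ)..c * t, u ^ m * planarDensity lam c u t =
      Real.exp (-(lam * t)) * lam * Real.Gamma ((m + 1) / 2) * (c * t) ^ (m + 1) / (2 * c) *
        (-besselSum 0 ((m + 1) / 2) ((lam * t / 2) ^ 2) +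
          (1 + lam * t / 2) * besselSum 1 ((m + 1) / 2) ((lam * t / 2) ^ 2) +
          2 * (lam * t / 2) ^ 2 * besselSum 2 ((m + 1) / 2) ((lam * t / 2) ^ 2)) := by
  set r := (lam / (2 * c)) ^ 2
  set E := Real.exp (-(lam * t)) / c
  set G : ℕ → ℝ → ℝ := fun j u => u ^ m * besselSeries r j (c ^ 2 * t ^ 2 - u ^ 2)
  have hint : ∀ j, IntervalIntegrable (G j) volume 0 (c * t) := fun j =>
    (by have := continuous_besselSeries r j; fun_prop : Continuous (G j)).intervalIntegrable _ _
  have hmoment : ∀ j, ∫ u in (0 : ℝ)..c * t, G j u = r ^ j * (c * t) ^ (m + 1) *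
      Real.Gamma ((m + 1) / 2) / 2 * besselSum j ((m + 1) / 2) ((lam * t / 2) ^ 2) := by
    intro j
    have h := integral_pow_mul_besselSeries r j m (c * t)
    rwa [mul_pow c t, show r * (c ^ 2 * t ^ 2) = (lam * t / 2) ^ 2 by simp only [r]; field_simp]
      at h
  calc ∫ u in (0 : ℝ)..c * t, u ^ m * planarDensity lam c u t
      = ∫ u in (0 : ℝ)..c * t, (E * -lam * G 0 u + E * (2 * c ^ 2 * t + 4 * c ^ 2 / lam) * G 1 u +
          E * (8 * c ^ 4 * t ^ 2 / lam) * G 2 u) :=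
        intervalIntegral.integral_congr fun u _ => by simp only [G, planarDensity_eq]; ring
    _ = E * -lam * (∫ u in (0 : ℝ)..c * t, G 0 u) +
          E * (2 * c ^ 2 * t + 4 * c ^ 2 / lam) * (∫ u in (0 : ℝ)..c * t, G 1 u) +
          E * (8 * c ^ 4 * t ^ 2 / lam) * ∫ u in (0 : ℝ)..c * t, G 2 u := by
        rw [intervalIntegral.integral_add (((hint 0).const_mul _).add ((hint 1).const_mul _))
          ((hint 2).const_mul _), intervalIntegral.integral_add ((hint 0).const_mul _)
          ((hint 1).const_mul _), intervalIntegral.integral_const_mul,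
          intervalIntegral.integral_const_mul, intervalIntegral.integral_const_mul]
    _ = _ := by
        rw [hmoment, hmoment, hmoment]
        simp only [E, r]
        field_simp
        ring

theorem mth_moment_U
    (lam c t : ℝ) (hlam : 0 < lam) (hc : 0 < c) (ht : 0 < t) (m : ℕ) (hm : 1 ≤ m) :
    (∫ u in (0 : ℝ)..(c * t), u ^ m * planarDensity lam c u t) +
        (c * t) ^ m * (Real.exp (-(lam * t)) * (1 + lam * t)) =
      Real.exp (-(lam * t)) / c *
        (lam / 2 * Real.Gamma (((m : ℝ) + 1) / 2) *
            (2 * c ^ 2 * t / lam) ^ (((m : ℝ) + 1) / 2) *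
            besselI (((m : ℝ) + 1) / 2) (lam * t) -
          2 / lam * (m : ℝ) * c ^ 2 * (c * t) ^ (m - 1) +
          Real.Gamma (((m : ℝ) + 1) / 2) * besselI (((m : ℝ) - 1) / 2) (lam * t) *
            (lam / 2 * (2 * c ^ 2 * t / lam) ^ (((m : ℝ) + 1) / 2) +
              2 * (m : ℝ) * c ^ 2 / lam *
                (2 * c ^ 2 * t / lam) ^ (((m : ℝ) - 1) / 2))) := by
  obtain ⟨n, rfl⟩ : ∃ n, m = n + 1 := ⟨m - 1, by omega⟩
  set ν : ℝ := (((n + 1 : ℕ) : ℝ) + 1) / 2 with hν_def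
  have hν : 1 ≤ ν := by rw [hν_def]; push_cast; linarith [n.cast_nonneg (α := ℝ)]
  set w := lam * t / 2
  set Z := 2 * c ^ 2 * t / lam
  have hw : 0 < w := by positivity
  have hZ : 0 < Z := by positivity
  have hΓ := Real.Gamma_pos_of_pos (show 0 < ν by linarith)
  have hZν : Z ^ ν = (c * t) ^ (n + 2) / w ^ ν := by
    rw [eq_div_iff (Real.rpow_pos_of_pos hw ν).ne', ← Real.mul_rpow hZ.le hw.le,
      show Z * w = (c * t) ^ 2 by simp only [Z, w]; field_simp, ← Real.rpow_natCast (c * t) 2,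
      ← Real.rpow_mul (by positivity), ← Real.rpow_natCast]
    congr 1
    rw [hν_def]; push_cast; ring
  have hS1 : besselSum 0 (ν - 1) (w ^ 2) = 1 / Real.Gamma ν + w ^ 2 * besselSum 1 ν (w ^ 2) := by
    simpa using besselSum_sub_one 0 hν (w ^ 2)
  rw [integral_pow_mul_planarDensity hlam.ne' hc.ne',
    besselI_eq_rpow_mul_besselSum _ (by positivity : 0 < lam * t),
    besselI_eq_rpow_mul_besselSum _ (by positivity : 0 < lam * t),
    show (((n + 1 : ℕ) : ℝ) - 1) / 2 = ν - 1 by rw [hν_def]; ring,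
    Real.rpow_sub_one hw.ne', Real.rpow_sub_one hZ.ne', hS1, mul_assoc 2 (w ^ 2),
    besselSum_two hν, hZν, Nat.add_sub_cancel]
  rw [← hν_def, show ((n + 1 : ℕ) : ℝ) = 2 * ν - 1 by rw [hν_def]; ring]
  simp only [w, Z]
  field_simp
  ring
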